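/- arXiv:2411.04214 — 3 statements merged into one kernel-verified Lean document; each statement's English description precedes it below -/
import Mathlib

section
/- In the complexified Clifford algebra C⊗Cl(1,n) with the Hermitian conjugation U† = e^0 U* e^0 (where * is reversion composed with complex conjugation), the pairing (U,V) = ⟨U†V⟩₀ (the scalar part of U†V) is a (sesquilinear) inner product; in particular (U,U) is a nonnegative real number and (U,U)=0 iff U=0. -/
open CliffordAlgebra TensorProduct

/-- The quadratic form of signature (1, m-1) on `Fin m → ℝ`. -/
noncomputable def Qf (m : ℕ) : QuadraticForm ℝ (Fin m → ℝ) :=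
  QuadraticMap.weightedSumSquares ℝ (fun i : Fin m => if (i : ℕ) = 0 then (1 : ℝ) else -1)

/-- The real Clifford algebra Cl(1, m-1). -/
abbrev Cl (m : ℕ) : Type := CliffordAlgebra (Qf m)

/-- The generator e^k of Cl(1,m-1), for k < m (junk value 0 otherwise). -/
noncomputable def eR (m : ℕ) (k : ℕ) : Cl m :=
  if h : k < m then CliffordAlgebra.ι (Qf m) (Pi.single (⟨k, h⟩ : Fin m) 1) else 0

/-- The complexified Clifford algebra ℂ ⊗ Cl(1,m-1). -/
abbrev CCl (m : ℕ) : Type := ℂ ⊗[ℝ] Cl m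

/-- The embedding of the real Clifford algebra into its complexification. -/
noncomputable def inc (m : ℕ) : Cl m →ₐ[ℝ] CCl m := Algebra.TensorProduct.includeRight

/-- The generator e^k inside the complexification. -/
noncomputable def eC (m : ℕ) (k : ℕ) : CCl m := inc m (eR m k)

/-- The list of commuting factors (1/2)(1 + i e^{2j+1} e^{2j+2}), j = 0, …, k-1,
i.e. (1/2)(1 + i e^{2μ-1} e^{2μ}) for μ = 1, …, k. -/
noncomputable def facs (m k : ℕ) : List (CCl m) :=
  (List.range k).map fun j =>
    (2 : ℂ)⁻¹ • ((1 : CCl m) + Complex.I • (eC m (2 * j + 1) * eC m (2 * j + 2)))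

/-- The idempotent t = (1/2)(1 + e^0) ∏_{μ=1}^{k} (1/2)(1 + i e^{2μ-1} e^{2μ}). -/
noncomputable def tIdem (m k : ℕ) : CCl m :=
  ((2 : ℂ)⁻¹ • ((1 : CCl m) + eC m 0)) * (facs m k).prod

/-- Reversion composed with complex conjugation on ℂ ⊗ Cl(1,m-1). -/
noncomputable def starC (m : ℕ) : CCl m →ₗ[ℝ] CCl m :=
  TensorProduct.map Complex.conjAe.toLinearMap (CliffordAlgebra.reverse (Q := Qf m))

/-- Hermitian conjugation U† = e^0 U* e^0. -/
noncomputable def dagger (m : ℕ) (U : CCl m) : CCl m := eC m 0 * starC m U * eC m 0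

/-- The scalar-part (grade-zero) projection of the real Clifford algebra. -/
noncomputable def scalR (m : ℕ) : Cl m →ₗ[ℝ] ℝ :=
  (ExteriorAlgebra.algebraMapInv (R := ℝ) (M := Fin m → ℝ)).toLinearMap ∘ₗ
    (CliffordAlgebra.equivExterior (Qf m)).toLinearMap

/-- The scalar-part projection ⟨·⟩₀ of the complexified Clifford algebra. -/
noncomputable def scalC (m : ℕ) : CCl m →ₗ[ℝ] ℂ :=
  (TensorProduct.rid ℝ ℂ).toLinearMap ∘ₗ TensorProduct.map LinearMap.id (scalR m)

/-- The inner product (U, V) = ⟨U† V⟩₀. -/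
noncomputable def ip (m : ℕ) (U V : CCl m) : ℂ := scalC m (dagger m U * V)

/-- `x = exp a` in the sense of the usual power series ∑ aᵏ/k!, tested against
all real linear functionals. -/
def IsExpOf (m : ℕ) (a x : Cl m) : Prop :=
  ∀ l : Cl m →ₗ[ℝ] ℝ, HasSum (fun k : ℕ => ((k.factorial : ℝ))⁻¹ • l (a ^ k)) (l x)

/-- The element I = -e¹e² of Cl(1, m-1). -/
noncomputable def Iel (m : ℕ) : Cl m := -(eR m 1 * eR m 2)

/-- The element I = -e¹e² of ℂ ⊗ Cl(1, m-1). -/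
noncomputable def IelC (m : ℕ) : CCl m := -(eC m 1 * eC m 2)

/-- The generators e⁰, e¹, e², e³, e⁵, e⁷, …  (e⁰, e², and odd-index generators). -/
def QpGens (m : ℕ) : Set (Cl m) :=
  {u | ∃ k : ℕ, k < m ∧ (k = 0 ∨ k = 2 ∨ Odd k) ∧ u = eR m k}

/-- The even part Q'⁽⁰⁾ of the real subalgebra Q' generated by e⁰, e¹, e², e³, e⁵, …, e^{2d-1}. -/
noncomputable def Qp0 (m : ℕ) : Subalgebra ℝ (Cl m) :=
  Algebra.adjoin ℝ (QpGens m) ⊓ CliffordAlgebra.even (Qf m)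

namespace Aux
variable {m : ℕ}

def qq (i : Fin m) : ℝ := if (i : ℕ) = 0 then (1 : ℝ) else -1

noncomputable def g (i : Fin m) : Cl m := CliffordAlgebra.ι (Qf m) (Pi.single i 1)

lemma Qf_single (i : Fin m) : Qf m (Pi.single i 1) = qq i := by
  classical
  simp only [Qf, QuadraticMap.weightedSumSquares_apply]
  rw [Finset.sum_eq_single i]
  · simp [qq]
  · intro b _ hb; simp [Pi.single_apply, hb]
  · simp

lemma Qf_polar (i j : Fin m) (h : i ≠ j) :
    QuadraticMap.polar (Qf m) (Pi.single i 1) (Pi.single j 1) = 0 := by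
  classical
  simp only [QuadraticMap.polar, Qf, QuadraticMap.weightedSumSquares_apply]
  rw [← Finset.sum_sub_distrib, ← Finset.sum_sub_distrib, Finset.sum_eq_zero]
  intro k _
  rcases eq_or_ne k i with rfl | hki
  · simp [Pi.single_apply, h.symm, Pi.single_eq_same]
  · rcases eq_or_ne k j with rfl | hkj
    · simp [Pi.single_apply, hki, h.symm]
    · simp [Pi.single_apply, hki, hkj]

lemma g_sq (i : Fin m) : g i * g i = algebraMap ℝ (Cl m) (qq i) := by
  rw [g, ι_sq_scalar, Qf_single]

lemma g_anticomm {i j : Fin m} (h : i ≠ j) : g i * g j = -(g j * g i) := by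
  have := CliffordAlgebra.ι_mul_ι_add_swap (Q := Qf m) (Pi.single i 1) (Pi.single j 1)
  rw [Qf_polar i j h] at this
  simp only [map_zero] at this
  rw [g, g, eq_neg_iff_add_eq_zero]
  exact this


noncomputable def P (w : List (Fin m)) : Cl m := (w.map g).prod

@[simp] lemma P_nil : P ([] : List (Fin m)) = 1 := rfl
@[simp] lemma P_cons (i : Fin m) (w : List (Fin m)) : P (i :: w) = g i * P w := by
  simp [P]
lemma P_append (w w' : List (Fin m)) : P (w ++ w') = P w * P w' := by
  simp [P]

/-- insert-or-delete into a sorted list -/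
def ins (i : Fin m) : List (Fin m) → List (Fin m)
  | [] => [i]
  | a :: l => if i = a then l else if i < a then i :: a :: l else a :: ins i l

noncomputable def sg (i : Fin m) : List (Fin m) → ℝ
  | [] => 1
  | a :: l => if i = a then qq i else if i < a then 1 else -(sg i l)

lemma mem_ins {i : Fin m} : ∀ {l : List (Fin m)}, ∀ x ∈ ins i l, x = i ∨ x ∈ l
  | [], x, hx => by simpa [ins] using hx
  | a :: l, x, hx => by
    rw [ins] at hx
    split_ifs at hx with h1 h2
    · exact Or.inr (List.mem_cons_of_mem a hx)
    · rcases List.mem_cons.mp hx with h | h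
      · exact Or.inl h
      · exact Or.inr h
    · rcases List.mem_cons.mp hx with h | h
      · exact Or.inr (by simp [h])
      · rcases mem_ins _ h with h' | h'
        · exact Or.inl h'
        · exact Or.inr (List.mem_cons_of_mem a h')

lemma ins_sorted {i : Fin m} : ∀ {l : List (Fin m)}, l.Pairwise (· < ·) →
    (ins i l).Pairwise (· < ·)
  | [], _ => by simp [ins]
  | a :: l, h => by
    rw [List.pairwise_cons] at h
    rw [ins]
    split_ifs with h1 h2
    · exact h.2
    · refine List.pairwise_cons.mpr ⟨?_, List.pairwise_cons.mpr h⟩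
      intro b hb
      rcases List.mem_cons.mp hb with rfl | hb'
      · exact h2
      · exact h2.trans (h.1 b hb')
    · refine List.pairwise_cons.mpr ⟨?_, ins_sorted h.2⟩
      intro b hb
      rcases mem_ins b hb with rfl | hb'
      · exact lt_of_le_of_ne (not_lt.mp h2) (Ne.symm h1)
      · exact h.1 b hb'

lemma mem_ins_ne {i j : Fin m} (hj : j ≠ i) : ∀ {l : List (Fin m)},
    (j ∈ ins i l ↔ j ∈ l)
  | [] => by simp [ins, hj]
  | a :: l => by
    rw [ins]
    split_ifs with h1 h2
    · subst h1; simp [hj]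
    · simp [hj]
    · simp [mem_ins_ne hj (l := l)]

lemma mem_ins_self {i : Fin m} : ∀ {l : List (Fin m)}, l.Pairwise (· < ·) →
    (i ∈ ins i l ↔ i ∉ l)
  | [], _ => by simp [ins]
  | a :: l, h => by
    rw [List.pairwise_cons] at h
    rw [ins]
    split_ifs with h1 h2
    · subst h1
      exact iff_of_false (fun hi => absurd (h.1 i hi) (lt_irrefl i))
        (fun h' => h' List.mem_cons_self)
    · refine iff_of_true List.mem_cons_self ?_
      intro hi
      rcases List.mem_cons.mp hi with rfl | hi
      · exact h1 rfl
      · exact absurd (h2.trans (h.1 i hi)) (lt_irrefl i)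
    · rw [List.mem_cons, List.mem_cons]
      have : ¬ i = a := h1
      simp only [this, false_or]
      exact mem_ins_self h.2

lemma g_mul_P {i : Fin m} : ∀ {l : List (Fin m)}, l.Pairwise (· < ·) →
    g i * P l = sg i l • P (ins i l)
  | [], _ => by simp [ins, sg]
  | a :: l, h => by
    rw [List.pairwise_cons] at h
    rw [ins, sg]
    split_ifs with h1 h2
    · subst h1
      rw [P_cons, ← mul_assoc, g_sq, Algebra.smul_def]
    · simp [P_cons]
    · have hne : i ≠ a := h1
      rw [P_cons, ← mul_assoc, g_anticomm hne, neg_mul, mul_assoc,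
        g_mul_P h.2, P_cons]
      rw [mul_smul_comm, neg_smul, ← smul_neg]


def red : List (Fin m) → List (Fin m) → List (Fin m)
  | [], l => l
  | i :: w, l => ins i (red w l)

lemma red_sorted {l : List (Fin m)} (hl : l.Pairwise (· < ·)) :
    ∀ (w : List (Fin m)), (red w l).Pairwise (· < ·)
  | [] => hl
  | _ :: w => ins_sorted (red_sorted hl w)

lemma P_mul_P {l : List (Fin m)} (hl : l.Pairwise (· < ·)) :
    ∀ (w : List (Fin m)), ∃ c : ℝ, P w * P l = c • P (red w l)
  | [] => ⟨1, by simp [P_nil, red]⟩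
  | i :: w => by
    obtain ⟨c, hc⟩ := P_mul_P hl w
    refine ⟨c * sg i (red w l), ?_⟩
    rw [P_cons, mul_assoc, hc, mul_smul_comm, g_mul_P (red_sorted hl w), red,
      smul_smul]

lemma mem_red_not_mem {j : Fin m} : ∀ {w l : List (Fin m)}, j ∉ w →
    (j ∈ red w l ↔ j ∈ l)
  | [], l, _ => Iff.rfl
  | i :: w, l, hj => by
    rw [red, mem_ins_ne (fun h => hj (List.mem_cons.mpr (Or.inl h)))]
    · exact mem_red_not_mem (fun h => hj (List.mem_cons_of_mem i h))

lemma mem_red_mem {j : Fin m} : ∀ {w l : List (Fin m)}, l.Pairwise (· < ·) →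
    w.Nodup → j ∈ w → (j ∈ red w l ↔ j ∉ l)
  | i :: w, l, hl, hw, hj => by
    rw [List.nodup_cons] at hw
    rcases List.mem_cons.mp hj with rfl | hj'
    · rw [red, mem_ins_self (red_sorted hl w), mem_red_not_mem hw.1]
    · have hji : j ≠ i := fun h => hw.1 (h ▸ hj')
      rw [red, mem_ins_ne hji, mem_red_mem hl hw.2 hj']

/-! ### dagger on the real algebra -/

variable (hm : 0 < m)

noncomputable def g0 (hm : 0 < m) : Cl m := g ⟨0, hm⟩

lemma g0_sq : g0 hm * g0 hm = 1 := by
  rw [g0, g_sq]; simp [qq]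

noncomputable def daggerR (hm : 0 < m) (x : Cl m) : Cl m :=
  g0 hm * reverse (Q := Qf m) x * g0 hm

lemma g0_mul_g {a : Fin m} (ha : a ≠ ⟨0, hm⟩) : g0 hm * g a = -(g a * g0 hm) :=
  g_anticomm ha.symm

lemma daggerR_P_cons (a : Fin m) (l : List (Fin m)) :
    daggerR hm (P (a :: l)) = daggerR hm (P l) * (g0 hm * g a * g0 hm) := by
  rw [daggerR, daggerR, P_cons, reverse.map_mul, g, reverse_ι, ← g]
  calc g0 hm * (reverse (Q := Qf m) (P l) * g a) * g0 hm
      = g0 hm * reverse (Q := Qf m) (P l) * ((g0 hm * g0 hm) * (g a * g0 hm)) := by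
        rw [g0_sq]; noncomm_ring
    _ = _ := by noncomm_ring

lemma dg_mul_self (a : Fin m) : (g0 hm * g a * g0 hm) * g a = 1 := by
  rcases eq_or_ne a ⟨0, hm⟩ with rfl | ha
  · rw [← g0]
    rw [show g0 hm * g0 hm * g0 hm * g0 hm = (g0 hm * g0 hm) * (g0 hm * g0 hm) by
      noncomm_ring, g0_sq, one_mul]
  · have h0 : (⟨0, hm⟩ : Fin m) ≠ a := ha.symm
    have hq : g a * g a = algebraMap ℝ (Cl m) (-1) := by
      rw [g_sq]
      congr 1
      simp only [qq, if_neg (by simpa [Fin.ext_iff] using ha)]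
    calc (g0 hm * g a * g0 hm) * g a = g0 hm * g a * (g0 hm * g a) := by noncomm_ring
      _ = g0 hm * g a * (-(g a * g0 hm)) := by rw [g0_mul_g hm ha]
      _ = -(g0 hm * (g a * g a) * g0 hm) := by noncomm_ring
      _ = -(g0 hm * algebraMap ℝ (Cl m) (-1) * g0 hm) := by rw [hq]
      _ = g0 hm * g0 hm := by
          rw [show algebraMap ℝ (Cl m) (-1) = (-1 : Cl m) by simp]
          noncomm_ring
      _ = 1 := g0_sq hm

lemma daggerR_P_mul_self : ∀ (l : List (Fin m)), daggerR hm (P l) * P l = 1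
  | [] => by
    rw [P_nil, daggerR, reverse.map_one,
      show g0 hm * 1 * g0 hm = g0 hm * g0 hm by noncomm_ring, mul_one]
    exact g0_sq hm
  | a :: l => by
    rw [daggerR_P_cons, P_cons,
      show daggerR hm (P l) * (g0 hm * g a * g0 hm) * (g a * P l)
        = daggerR hm (P l) * ((g0 hm * g a * g0 hm * g a) * P l) by noncomm_ring,
      dg_mul_self, one_mul, daggerR_P_mul_self l]

lemma daggerR_P (l : List (Fin m)) : ∃ ε : ℝ, daggerR hm (P l) = ε • P l.reverse := by
  induction l with
  | nil => exact ⟨1, by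
      rw [P_nil, daggerR, reverse.map_one,
        show g0 hm * 1 * g0 hm = g0 hm * g0 hm by noncomm_ring, List.reverse_nil, P_nil,
        one_smul]
      exact g0_sq hm⟩
  | cons a l ih =>
    obtain ⟨ε, hε⟩ := ih
    have hda : ∃ δ : ℝ, g0 hm * g a * g0 hm = δ • g a := by
      rcases eq_or_ne a ⟨0, hm⟩ with rfl | ha
      · exact ⟨1, by rw [one_smul, ← g0, g0_sq, one_mul]⟩
      · refine ⟨-1, ?_⟩
        rw [show g0 hm * g a * g0 hm = (g0 hm * g a) * g0 hm by noncomm_ring, g0_mul_g hm ha]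
        rw [show -(g a * g0 hm) * g0 hm = -(g a * (g0 hm * g0 hm)) by noncomm_ring, g0_sq]
        simp
    obtain ⟨δ, hδ⟩ := hda
    refine ⟨ε * δ, ?_⟩
    rw [daggerR_P_cons, hε, hδ, List.reverse_cons, P_append, smul_mul_smul_comm]
    simp [P_cons, P_nil, mul_smul]


noncomputable def Pext (w : List (Fin m)) : ExteriorAlgebra ℝ (Fin m → ℝ) :=
  (w.map (fun i => ExteriorAlgebra.ι ℝ (Pi.single i 1))).prod

@[simp] lemma Pext_nil : Pext ([] : List (Fin m)) = 1 := rfl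
@[simp] lemma Pext_cons (i : Fin m) (w : List (Fin m)) :
    Pext (i :: w) = ExteriorAlgebra.ι ℝ (Pi.single i 1) * Pext w := by simp [Pext]

lemma assoc_neg_single {i j : Fin m} (h : i ≠ j) :
    (QuadraticMap.associated (R := ℝ) (-(Qf m))) (Pi.single i 1) (Pi.single j 1) = 0 := by
  rw [QuadraticMap.associated_apply]
  have : QuadraticMap.polar (⇑(-(Qf m))) (Pi.single i 1) (Pi.single j 1) = 0 := by
    have := Qf_polar i j h
    simp only [QuadraticMap.polar] at this ⊢
    simp only [QuadraticMap.neg_apply]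
    linarith [this]
  simp only [QuadraticMap.polar] at this
  rw [show ((-(Qf m)) (Pi.single i 1 + Pi.single j 1) - (-(Qf m)) (Pi.single i 1) -
    (-(Qf m)) (Pi.single j 1)) = 0 from this]
  simp

lemma contract_Pext (d : Module.Dual ℝ (Fin m → ℝ)) :
    ∀ (w : List (Fin m)), (∀ j ∈ w, d (Pi.single j 1) = 0) →
    CliffordAlgebra.contractLeft (Q := (0 : QuadraticForm ℝ (Fin m → ℝ))) d (Pext w) = 0
  | [], _ => by simp [CliffordAlgebra.contractLeft_one]
  | i :: w, hw => by
    rw [Pext_cons, ExteriorAlgebra.ι, CliffordAlgebra.contractLeft_ι_mul,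
      contract_Pext d w (fun j hj => hw j (List.mem_cons_of_mem i hj)),
      hw i List.mem_cons_self]
    simp

lemma equivExterior_P : ∀ (w : List (Fin m)), w.Pairwise (· ≠ ·) →
    CliffordAlgebra.equivExterior (Qf m) (P w) = Pext w
  | [], _ => by
    rw [P_nil, Pext_nil]
    simp only [CliffordAlgebra.equivExterior, CliffordAlgebra.changeFormEquiv_apply]
    exact CliffordAlgebra.changeForm_one _
  | i :: w, hw => by
    rw [List.pairwise_cons] at hw
    rw [P_cons, Pext_cons, g]
    have ih := equivExterior_P w hw.2
    simp only [CliffordAlgebra.equivExterior, CliffordAlgebra.changeFormEquiv_apply] at ih ⊢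
    rw [CliffordAlgebra.changeForm_ι_mul, ih,
      contract_Pext _ w (fun j hj => assoc_neg_single (hw.1 j hj)), sub_zero]

lemma scalR_one : scalR m 1 = 1 := by
  rw [scalR]
  simp only [LinearMap.comp_apply, LinearEquiv.coe_toLinearMap, AlgHom.toLinearMap_apply]
  rw [show CliffordAlgebra.equivExterior (Qf m) 1 = 1 by
    simp only [CliffordAlgebra.equivExterior, CliffordAlgebra.changeFormEquiv_apply]
    exact CliffordAlgebra.changeForm_one _]
  exact map_one _

lemma scalR_P_ne (w : List (Fin m)) (hw : w.Pairwise (· ≠ ·)) (hne : w ≠ []) :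
    scalR m (P w) = 0 := by
  rw [scalR]
  simp only [LinearMap.comp_apply, LinearEquiv.coe_toLinearMap, AlgHom.toLinearMap_apply]
  rw [equivExterior_P w hw]
  cases w with
  | nil => exact absurd rfl hne
  | cons i w =>
    rw [Pext_cons, map_mul]
    rw [show ExteriorAlgebra.algebraMapInv (ExteriorAlgebra.ι ℝ (M := Fin m → ℝ)
      (Pi.single i 1)) = 0 from ?_, zero_mul]
    rw [ExteriorAlgebra.algebraMapInv]
    simp [ExteriorAlgebra.lift_ι_apply]


lemma P_mul_P' {l : List (Fin m)} (hl : l.Pairwise (· < ·)) (w : List (Fin m)) :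
    ∃ (c : ℝ) (u : List (Fin m)), u.Pairwise (· < ·) ∧ P w * P l = c • P u := by
  obtain ⟨c, hc⟩ := P_mul_P hl w
  exact ⟨c, red w l, red_sorted hl w, hc⟩

lemma scalR_onb (hm : 0 < m) (S T : Finset (Fin m)) :
    scalR m (daggerR hm (P (S.sort (· ≤ ·))) * P (T.sort (· ≤ ·))) = if S = T then 1 else 0 := by
  rcases eq_or_ne S T with rfl | hST
  · rw [if_pos rfl, daggerR_P_mul_self hm, scalR_one]
  · rw [if_neg hST]
    obtain ⟨ε, hε⟩ := daggerR_P hm (S.sort (· ≤ ·))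
    set w : List (Fin m) := (S.sort (· ≤ ·)).reverse with hw
    have hlT : (T.sort (· ≤ ·)).Pairwise (· < ·) := (Finset.sortedLT_sort T).pairwise
    obtain ⟨c, hc⟩ := P_mul_P hlT w
    rw [hε, smul_mul_assoc, hc, map_smul, map_smul]
    have hwnd : w.Nodup := by
      rw [hw, List.nodup_reverse]
      exact Finset.sort_nodup _ _
    have hmemw : ∀ j, j ∈ w ↔ j ∈ S := by
      intro j
      rw [hw, List.mem_reverse, Finset.mem_sort]
    have hmemT : ∀ j, j ∈ T.sort (· ≤ ·) ↔ j ∈ T := fun j => Finset.mem_sort _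
    -- find a witness j in the symmetric difference
    have hj : ∃ j, ¬(j ∈ S ↔ j ∈ T) := by
      by_contra h
      push_neg at h
      exact hST (Finset.ext fun j => h j)
    obtain ⟨j, hj⟩ := hj
    have hne : red w (T.sort (· ≤ ·)) ≠ [] := by
      intro hnil
      by_cases hjS : j ∈ S
      · have : j ∈ red w (T.sort (· ≤ ·)) ↔ j ∉ T.sort (· ≤ ·) :=
          mem_red_mem hlT hwnd ((hmemw j).mpr hjS)
        rw [hnil] at this
        simp only [List.not_mem_nil, false_iff, not_not] at this
        exact hj ⟨fun _ => (hmemT j).mp this, fun _ => hjS⟩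
      · have : j ∈ red w (T.sort (· ≤ ·)) ↔ j ∈ T.sort (· ≤ ·) :=
          mem_red_not_mem (fun h => hjS ((hmemw j).mp h))
        rw [hnil] at this
        simp only [List.not_mem_nil, false_iff] at this
        exact hj ⟨fun h => absurd hjS (fun _ => hjS h), fun hT => absurd ((hmemT j).mpr hT) this⟩
    have hred := red_sorted hlT w
    rw [scalR_P_ne _ (hred.imp (fun h => ne_of_lt h)) hne, smul_zero, smul_zero]
  
noncomputable def bb (S : Finset (Fin m)) : Cl m := P (S.sort (· ≤ ·))

lemma P_mem_range_bb {u : List (Fin m)} (hu : u.Pairwise (· < ·)) :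
    P u ∈ Set.range (bb (m := m)) := by
  refine ⟨u.toFinset, ?_⟩
  rw [bb, (List.toFinset_sort (· ≤ ·) hu.nodup).mpr (hu.imp le_of_lt)]

def sortedSet (m : ℕ) : Set (Cl m) := {x | ∃ u : List (Fin m), u.Pairwise (· < ·) ∧ x = P u}

lemma span_sorted : Submodule.span ℝ (sortedSet m) = ⊤ := by
  rw [Submodule.eq_top_iff']
  intro x
  induction x using CliffordAlgebra.induction with
  | algebraMap r =>
    rw [Algebra.algebraMap_eq_smul_one]
    exact Submodule.smul_mem _ _ (Submodule.subset_span ⟨[], List.Pairwise.nil, P_nil.symm⟩)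
  | ι v =>
    have hv : v = ∑ i : Fin m, v i • (Pi.single i (1 : ℝ) : Fin m → ℝ) := by
      ext j
      simp [Pi.single_apply, mul_comm]
    rw [hv, map_sum]
    refine Submodule.sum_mem _ fun i _ => ?_
    rw [map_smul]
    refine Submodule.smul_mem _ _ (Submodule.subset_span ⟨[i], List.pairwise_singleton _ i, ?_⟩)
    rw [P_cons, P_nil, mul_one, g]
  | mul x y hx hy =>
    have key : ∀ z ∈ sortedSet m, ∀ y ∈ Submodule.span ℝ (sortedSet m),
        z * y ∈ Submodule.span ℝ (sortedSet m) := by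
      rintro z ⟨u, hu, rfl⟩ y hy
      induction hy using Submodule.span_induction with
      | mem w hw =>
        obtain ⟨u', hu', rfl⟩ := hw
        obtain ⟨c, u'', hu'', h⟩ := P_mul_P' hu' u
        rw [h]
        exact Submodule.smul_mem _ _ (Submodule.subset_span ⟨u'', hu'', rfl⟩)
      | zero => rw [mul_zero]; exact Submodule.zero_mem _
      | add a b _ _ ha hb => rw [mul_add]; exact Submodule.add_mem _ ha hb
      | smul c a _ ha => rw [mul_smul_comm]; exact Submodule.smul_mem _ _ ha
    induction hx using Submodule.span_induction with
    | mem z hz => exact key z hz y hy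
    | zero => rw [zero_mul]; exact Submodule.zero_mem _
    | add a b _ _ ha hb => rw [add_mul]; exact Submodule.add_mem _ ha hb
    | smul c a _ ha => rw [smul_mul_assoc]; exact Submodule.smul_mem _ _ ha
  | add x y hx hy => exact Submodule.add_mem _ hx hy

noncomputable def W (S : Finset (Fin m)) : CCl m := (1 : ℂ) ⊗ₜ[ℝ] bb S

lemma mem_spanW (U : CCl m) : U ∈ Submodule.span ℂ (Set.range (W (m := m))) := by
  induction U using TensorProduct.induction_on with
  | zero => exact Submodule.zero_mem _
  | add x y hx hy => exact Submodule.add_mem _ hx hy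
  | tmul z x =>
    have hx : x ∈ Submodule.span ℝ (sortedSet m) := by rw [span_sorted]; trivial
    induction hx using Submodule.span_induction with
    | mem w hw =>
      obtain ⟨u, hu, rfl⟩ := hw
      obtain ⟨S, hS⟩ := P_mem_range_bb hu
      have : z ⊗ₜ[ℝ] P u = z • W S := by
        rw [W, smul_tmul', smul_eq_mul, mul_one, hS]
      rw [this]
      exact Submodule.smul_mem _ _ (Submodule.subset_span ⟨S, rfl⟩)
    | zero => rw [tmul_zero]; exact Submodule.zero_mem _
    | add a b _ _ ha hb => rw [tmul_add]; exact Submodule.add_mem _ ha hb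
    | smul c a _ ha =>
      rw [tmul_smul]
      exact Submodule.smul_mem
        ((Submodule.span ℂ (Set.range (W (m := m)))).restrictScalars ℝ) c ha

/-! ### ip lemmas -/

lemma starC_tmul (z : ℂ) (x : Cl m) :
    starC m (z ⊗ₜ[ℝ] x) = (starRingEnd ℂ z) ⊗ₜ[ℝ] reverse (Q := Qf m) x := by
  simp [starC, TensorProduct.map_tmul, Complex.conjAe]

lemma starC_csmul (c : ℂ) (U : CCl m) : starC m (c • U) = (starRingEnd ℂ c) • starC m U := by
  induction U using TensorProduct.induction_on with
  | zero => simp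
  | tmul z x =>
    rw [smul_tmul', starC_tmul, starC_tmul, smul_tmul', smul_eq_mul, smul_eq_mul, map_mul]
  | add x y hx hy => rw [smul_add, map_add, map_add, hx, hy, smul_add]

lemma dagger_add (U V : CCl m) : dagger m (U + V) = dagger m U + dagger m V := by
  simp [dagger, map_add, mul_add, add_mul]

lemma dagger_csmul (c : ℂ) (U : CCl m) :
    dagger m (c • U) = (starRingEnd ℂ c) • dagger m U := by
  rw [dagger, dagger, starC_csmul, mul_smul_comm, smul_mul_assoc]

lemma scalC_tmul (z : ℂ) (x : Cl m) : scalC m (z ⊗ₜ[ℝ] x) = scalR m x • z := by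
  simp [scalC, TensorProduct.map_tmul, TensorProduct.rid_tmul]

lemma scalC_csmul (c : ℂ) (U : CCl m) : scalC m (c • U) = c * scalC m U := by
  induction U using TensorProduct.induction_on with
  | zero => simp
  | tmul z x =>
    rw [smul_tmul', scalC_tmul, scalC_tmul, smul_eq_mul]
    simp only [Complex.real_smul]
    ring
  | add x y hx hy => rw [smul_add, map_add, map_add, hx, hy, mul_add]

lemma ip_add_left (U U' V : CCl m) : ip m (U + U') V = ip m U V + ip m U' V := by
  rw [ip, ip, ip, dagger_add, add_mul, map_add]

lemma ip_add_right (U V V' : CCl m) : ip m U (V + V') = ip m U V + ip m U V' := by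
  rw [ip, ip, ip, mul_add, map_add]

lemma ip_csmul_left (c : ℂ) (U V : CCl m) :
    ip m (c • U) V = starRingEnd ℂ c * ip m U V := by
  rw [ip, ip, dagger_csmul, smul_mul_assoc, scalC_csmul]

lemma ip_csmul_right (c : ℂ) (U V : CCl m) : ip m U (c • V) = c * ip m U V := by
  rw [ip, ip, mul_smul_comm, scalC_csmul]

lemma ip_zero_left (V : CCl m) : ip m 0 V = 0 := by
  have := ip_add_left (m := m) 0 0 V
  rw [add_zero] at this
  rwa [left_eq_add] at this

lemma ip_sum_left {ι : Type*} (s : Finset ι) (f : ι → CCl m) (V : CCl m) :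
    ip m (∑ i ∈ s, f i) V = ∑ i ∈ s, ip m (f i) V := by
  classical
  induction s using Finset.induction_on with
  | empty => simp [ip_zero_left]
  | insert _ _ h ih => rw [Finset.sum_insert h, Finset.sum_insert h, ip_add_left, ih]

lemma ip_zero_right (U : CCl m) : ip m U 0 = 0 := by
  have := ip_add_right (m := m) U 0 0
  rw [add_zero] at this
  rwa [left_eq_add] at this

lemma ip_sum_right {ι : Type*} (s : Finset ι) (U : CCl m) (f : ι → CCl m) :
    ip m U (∑ i ∈ s, f i) = ∑ i ∈ s, ip m U (f i) := by
  classical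
  induction s using Finset.induction_on with
  | empty => simp [ip_zero_right]
  | insert _ _ h ih => rw [Finset.sum_insert h, Finset.sum_insert h, ip_add_right, ih]

/-! ### orthonormality at the complex level -/

lemma eC_zero (hm : 0 < m) : eC m 0 = (1 : ℂ) ⊗ₜ[ℝ] g ⟨0, hm⟩ := by
  rw [eC, eR, dif_pos hm, inc, g]
  rfl

lemma ip_W (hm : 0 < m) (S T : Finset (Fin m)) :
    ip m (W S) (W T) = if S = T then 1 else 0 := by
  rw [ip, dagger, W, W, starC_tmul, eC_zero hm]
  simp only [map_one, Algebra.TensorProduct.tmul_mul_tmul, one_mul, mul_one]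
  rw [show g (⟨0, hm⟩ : Fin m) * reverse (Q := Qf m) (bb S) * g ⟨0, hm⟩ * bb T
    = daggerR hm (bb S) * bb T from rfl]
  rw [scalC_tmul, bb, bb, scalR_onb hm]
  split_ifs <;> norm_num


lemma ip_expand (hm : 0 < m) (c d : Finset (Fin m) → ℂ) :
    ip m (∑ S, c S • W S) (∑ T, d T • W T) =
      ∑ S, starRingEnd ℂ (c S) * d S := by
  rw [ip_sum_left]
  refine Finset.sum_congr rfl fun S _ => ?_
  rw [ip_csmul_left, ip_sum_right]
  have : ∀ T : Finset (Fin m), ip m (W S) (d T • W T) = d T * ip m (W S) (W T) :=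
    fun T => ip_csmul_right _ _ _
  simp only [this, ip_W hm, mul_ite, mul_one, mul_zero, Finset.sum_ite_eq, Finset.mem_univ,
    if_pos]

lemma getRep (U : CCl m) : ∃ c : Finset (Fin m) → ℂ, ∑ S, c S • W S = U :=
  (Submodule.mem_span_range_iff_exists_fun ℂ).mp (mem_spanW U)


end Aux

open Aux in
/-- The pairing (U,V) = ⟨U†V⟩₀ on ℂ ⊗ Cl(1,n) is a sesquilinear inner product:
in particular (U,U) is a nonnegative real number, vanishing iff U = 0. -/
theorem stmt9 (n : ℕ) :
    (∀ U U' V : CCl (n + 1), ip (n + 1) (U + U') V = ip (n + 1) U V + ip (n + 1) U' V) ∧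
      (∀ U V V' : CCl (n + 1), ip (n + 1) U (V + V') = ip (n + 1) U V + ip (n + 1) U V') ∧
      (∀ (c : ℂ) (U V : CCl (n + 1)),
        ip (n + 1) (c • U) V = starRingEnd ℂ c * ip (n + 1) U V) ∧
      (∀ (c : ℂ) (U V : CCl (n + 1)), ip (n + 1) U (c • V) = c * ip (n + 1) U V) ∧
      (∀ U V : CCl (n + 1), starRingEnd ℂ (ip (n + 1) U V) = ip (n + 1) V U) ∧
      (∀ U : CCl (n + 1), (ip (n + 1) U U).im = 0 ∧ 0 ≤ (ip (n + 1) U U).re) ∧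
      (∀ U : CCl (n + 1), ip (n + 1) U U = 0 ↔ U = 0) := by
  have hm : 0 < n + 1 := Nat.succ_pos n
  refine ⟨ip_add_left, ip_add_right, ip_csmul_left, ip_csmul_right, ?_, ?_, ?_⟩
  · intro U V
    obtain ⟨u, hu⟩ := getRep U
    obtain ⟨v, hv⟩ := getRep V
    rw [← hu, ← hv, ip_expand hm, ip_expand hm, map_sum]
    refine Finset.sum_congr rfl fun S _ => ?_
    rw [map_mul, Complex.conj_conj]
    ring
  · intro U
    obtain ⟨u, hu⟩ := getRep U
    rw [← hu, ip_expand hm]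
    have : ∀ S : Finset (Fin (n+1)), starRingEnd ℂ (u S) * u S = (Complex.normSq (u S) : ℂ) :=
      fun S => (Complex.normSq_eq_conj_mul_self).symm
    simp only [this]
    constructor
    · rw [Complex.im_sum]
      simp
    · rw [Complex.re_sum]
      simp only [Complex.ofReal_re]
      exact Finset.sum_nonneg fun S _ => Complex.normSq_nonneg _
  · intro U
    constructor
    · intro h
      obtain ⟨u, hu⟩ := getRep U
      rw [← hu, ip_expand hm] at h
      have h2 : ∀ S : Finset (Fin (n+1)), u S = 0 := by
        have : ∑ S : Finset (Fin (n+1)), Complex.normSq (u S) = 0 := by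
          have := congrArg Complex.re h
          rw [Complex.re_sum] at this
          simpa [Complex.normSq_eq_conj_mul_self, Complex.normSq_apply] using this
        intro S
        have hS := (Finset.sum_eq_zero_iff_of_nonneg
          (fun S _ => Complex.normSq_nonneg (u S))).mp this S (Finset.mem_univ S)
        exact Complex.normSq_eq_zero.mp hS
      rw [← hu]
      simp [h2]
    · rintro rfl
      obtain ⟨u, hu⟩ := getRep (0 : CCl (n+1))
      have h0 : ip (n+1) (0 : CCl (n+1)) 0 = 0 := by
        have := ip_add_left (m := n+1) 0 0 0
        rw [add_zero] at this
        rwa [left_eq_add] at this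
      exact h0
end

section
/- Let t = (1/2)(1+e^0)·∏_{μ=1}^{d-1}(1/2)(1 + i e^{2μ-1}e^{2μ}) in C⊗Cl(1,2d-1) and let Q' be the real subalgebra of Cl(1,2d-1) generated by e^0, e^1, e^2, e^3, e^5, e^7, ..., e^{2d-1}, with Q'^(0) its even part. If Y ∈ Q'^(0) and Y t = 0, then Y = 0. -/
set_option maxHeartbeats 2000000

open CliffordAlgebra TensorProduct

/-! ### Auxiliary machinery for Statement 11 -/

/-- The linear map negating the `j`-th coordinate. -/
noncomputable def negL (m : ℕ) (j : Fin m) : (Fin m → ℝ) →ₗ[ℝ] (Fin m → ℝ) where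
  toFun x := fun i => if i = j then -x i else x i
  map_add' x y := by funext i; by_cases h : i = j <;> simp [h] <;> ring
  map_smul' c x := by funext i; by_cases h : i = j <;> simp [h] <;> ring

@[simp] lemma negL_apply (m : ℕ) (j : Fin m) (x : Fin m → ℝ) (i : Fin m) :
    negL m j x i = if i = j then -x i else x i := rfl

/-- Negating a coordinate is an isometry of `Qf m`. -/
noncomputable def negIso (m : ℕ) (j : Fin m) : Qf m →qᵢ Qf m where
  toLinearMap := negL m j
  map_app' x := by
    simp only [Qf, QuadraticMap.weightedSumSquares_apply]
    refine Finset.sum_congr rfl fun i _ => ?_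
    by_cases h : i = j <;> simp [h] <;> ring

@[simp] lemma negIso_apply (m : ℕ) (j : Fin m) (x : Fin m → ℝ) :
    negIso m j x = negL m j x := rfl

/-- The reflection automorphism of `Cl m` negating `eR m j`. -/
noncomputable def rflA (m : ℕ) (j : Fin m) : Cl m →ₐ[ℝ] Cl m :=
  CliffordAlgebra.map (negIso m j)

lemma rflA_eR (m : ℕ) (j : Fin m) (k : ℕ) (hk : k ≠ (j : ℕ)) :
    rflA m j (eR m k) = eR m k := by
  unfold eR
  split_ifs with h
  · rw [rflA, CliffordAlgebra.map_apply_ι]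
    congr 1
    funext i
    rw [negIso_apply, negL_apply]
    by_cases hij : i = j
    · subst hij
      rw [if_pos rfl, Pi.single_eq_of_ne (by simpa [Fin.ext_iff] using fun e => hk e.symm) 1,
        neg_zero]
    · rw [if_neg hij]
  · simp

lemma rflA_eR_self (m : ℕ) (j : Fin m) : rflA m j (eR m (j : ℕ)) = -(eR m (j : ℕ)) := by
  unfold eR
  rw [dif_pos j.isLt, rflA, CliffordAlgebra.map_apply_ι, ← map_neg]
  congr 1
  funext i
  rw [negIso_apply, negL_apply]
  by_cases hij : i = j
  · subst hij; simp [Fin.eta]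
  · simp [hij, Pi.single_eq_of_ne (by simpa [Fin.ext_iff, eq_comm] using hij)]

/-- A tensor-product algebra endomorphism of `CCl m`. -/
noncomputable def phiOf (m : ℕ) (g : ℂ →ₐ[ℝ] ℂ) (f : Cl m →ₐ[ℝ] Cl m) : CCl m →ₐ[ℝ] CCl m :=
  Algebra.TensorProduct.map g f

lemma phiOf_smul (m : ℕ) (g : ℂ →ₐ[ℝ] ℂ) (f : Cl m →ₐ[ℝ] Cl m) (c : ℂ) (x : CCl m) :
    phiOf m g f (c • x) = g c • phiOf m g f x := by
  induction x using TensorProduct.induction_on with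
  | zero => rw [smul_zero, map_zero, smul_zero]
  | tmul a b =>
    rw [TensorProduct.smul_tmul', phiOf, Algebra.TensorProduct.map_tmul,
      Algebra.TensorProduct.map_tmul, TensorProduct.smul_tmul', smul_eq_mul, smul_eq_mul,
      map_mul]
  | add x y hx hy => rw [smul_add, map_add, hx, hy, map_add, smul_add]

lemma phiOf_inc (m : ℕ) (g : ℂ →ₐ[ℝ] ℂ) (f : Cl m →ₐ[ℝ] Cl m) (x : Cl m) :
    phiOf m g f (inc m x) = inc m (f x) := by
  rw [inc, Algebra.TensorProduct.includeRight_apply, phiOf, Algebra.TensorProduct.map_tmul,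
    map_one, Algebra.TensorProduct.includeRight_apply]

lemma phiOf_eC (m : ℕ) (g : ℂ →ₐ[ℝ] ℂ) (f : Cl m →ₐ[ℝ] Cl m) (k : ℕ) :
    phiOf m g f (eC m k) = inc m (f (eR m k)) := phiOf_inc m g f (eR m k)

lemma inc_eR (m k : ℕ) : inc m (eR m k) = eC m k := rfl

/-- Reflections at even coordinates `≥ 4` fix the subalgebra `Q'`. -/
lemma rflA_fix (m : ℕ) (j : Fin m) (hj0 : (j : ℕ) ≠ 0) (hj2 : (j : ℕ) ≠ 2)
    (hje : ¬ Odd (j : ℕ)) {Y : Cl m} (hY : Y ∈ Algebra.adjoin ℝ (QpGens m)) :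
    rflA m j Y = Y := by
  induction hY using Algebra.adjoin_induction with
  | mem x hx =>
    obtain ⟨k, hk, hcase, rfl⟩ := hx
    refine rflA_eR m j k ?_
    rcases hcase with h | h | h
    · exact fun e => hj0 (h ▸ e).symm
    · exact fun e => hj2 (h ▸ e).symm
    · exact fun e => hje (e ▸ h)
  | algebraMap r => exact AlgHom.commutes _ r
  | add x y _ _ hx hy => rw [map_add, hx, hy]
  | mul x y _ _ hx hy => rw [map_mul, hx, hy]

lemma peel {R : Type*} [Ring R] {A f f' : R} (h1 : A * f = 0) (h2 : A * f' = 0)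
    (h3 : f + f' = 1) : A = 0 := by
  calc A = A * (f + f') := by rw [h3, mul_one]
    _ = 0 := by rw [mul_add, h1, h2, add_zero]

/-- One factor of `facs`. -/
noncomputable def fac (m j : ℕ) : CCl m :=
  (2 : ℂ)⁻¹ • ((1 : CCl m) + Complex.I • (eC m (2 * j + 1) * eC m (2 * j + 2)))

lemma facs_eq (m k : ℕ) : facs m k = (List.range k).map (fac m) := rfl

lemma tIdem_succ (m k : ℕ) : tIdem m (k + 1) = tIdem m k * fac m k := by
  rw [tIdem, tIdem, facs_eq, facs_eq, List.range_succ, List.map_append, List.prod_append,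
    List.map_singleton, List.prod_singleton, mul_assoc]

lemma halves (m : ℕ) (X : CCl m) :
    (2 : ℂ)⁻¹ • ((1 : CCl m) + Complex.I • X) +
      (2 : ℂ)⁻¹ • ((1 : CCl m) + (-Complex.I) • X) = 1 := by
  rw [← smul_add, add_add_add_comm, ← add_smul, add_neg_cancel, zero_smul, add_zero,
    ← two_smul ℂ (1 : CCl m), smul_smul, inv_mul_cancel₀ two_ne_zero, one_smul]

lemma half_smul_zero {m : ℕ} {A : CCl m} (h : (2 : ℂ)⁻¹ • A = 0) : A = 0 := by
  have h2 := congrArg (fun z : CCl m => (2 : ℂ) • z) h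
  simp only [smul_smul, mul_inv_cancel₀ (by norm_num : (2 : ℂ) ≠ 0), one_smul, smul_zero] at h2
  exact h2

lemma phiR_fac (m : ℕ) (j : Fin m) (j' : ℕ) (h1 : 2 * j' + 1 ≠ (j : ℕ))
    (h2 : 2 * j' + 2 ≠ (j : ℕ)) :
    phiOf m (AlgHom.id ℝ ℂ) (rflA m j) (fac m j') = fac m j' := by
  rw [fac, phiOf_smul, map_add, map_one, phiOf_smul, map_mul, phiOf_eC, phiOf_eC,
    rflA_eR _ _ _ h1, rflA_eR _ _ _ h2]
  rfl

lemma phiR_fac_self (m : ℕ) (j : Fin m) (k : ℕ) (h1 : 2 * k + 1 ≠ (j : ℕ))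
    (h2 : 2 * k + 2 = (j : ℕ)) :
    phiOf m (AlgHom.id ℝ ℂ) (rflA m j) (fac m k) =
      (2 : ℂ)⁻¹ • ((1 : CCl m) + (-Complex.I) • (eC m (2 * k + 1) * eC m (2 * k + 2))) := by
  have e2 : rflA m j (eR m (2 * k + 2)) = -eR m (2 * k + 2) := by
    rw [h2]; exact rflA_eR_self m j
  rw [fac, phiOf_smul, map_add, map_one, phiOf_smul, map_mul, phiOf_eC, phiOf_eC,
    rflA_eR _ _ _ h1, e2, AlgHom.id_apply, AlgHom.id_apply, inc_eR]
  congr 2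
  exact (congrArg (Complex.I • ·) ((congrArg (eC m (2 * k + 1) * ·)
      (map_neg (inc m) (eR m (2 * k + 2)))).trans
    (mul_neg (eC m (2 * k + 1)) (inc m (eR m (2 * k + 2)))))).trans
    ((smul_neg Complex.I (eC m (2 * k + 1) * eC m (2 * k + 2))).trans
      (neg_smul Complex.I (eC m (2 * k + 1) * eC m (2 * k + 2))).symm)

lemma phiR_eC0 (m : ℕ) (j : Fin m) (hj0 : (j : ℕ) ≠ 0) :
    phiOf m (AlgHom.id ℝ ℂ) (rflA m j) (eC m 0) = eC m 0 := by
  rw [phiOf_eC, rflA_eR _ _ _ fun e => hj0 e.symm]; rfl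

lemma conj_toAlgHom_apply (c : ℂ) :
    (Complex.conjAe.toAlgHom : ℂ →ₐ[ℝ] ℂ) c = (starRingEnd ℂ) c := rfl

/-- The key peeling step: kill the last factor of `t` using a reflection. -/
lemma step (m k : ℕ) (Y : Cl m) (hYa : Y ∈ Algebra.adjoin ℝ (QpGens m)) (hk : 1 ≤ k)
    (h : inc m Y * tIdem m (k + 1) = 0) : inc m Y * tIdem m k = 0 := by
  rw [tIdem_succ, ← mul_assoc] at h
  by_cases hm : 2 * k + 2 < m
  · -- reflection case
    set j : Fin m := ⟨2 * k + 2, hm⟩ with hj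
    have hjv : (j : ℕ) = 2 * k + 2 := rfl
    set φ := phiOf m (AlgHom.id ℝ ℂ) (rflA m j) with hφ
    have hA : φ (inc m Y * tIdem m k) = inc m Y * tIdem m k := by
      rw [map_mul]
      have hY' : φ (inc m Y) = inc m Y := by
        rw [hφ, phiOf_inc,
          rflA_fix m j (by omega) (by omega) (by simp [hjv, Nat.odd_iff, Nat.add_mul_mod_self_left]) hYa]
      have ht : φ (tIdem m k) = tIdem m k := by
        rw [tIdem, map_mul]
        have hp0 : φ ((2 : ℂ)⁻¹ • ((1 : CCl m) + eC m 0)) =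
            (2 : ℂ)⁻¹ • ((1 : CCl m) + eC m 0) := by
          rw [hφ, phiOf_smul, map_add, map_one, phiR_eC0 m j (by omega)]
          rfl
        have hprod : φ (facs m k).prod = (facs m k).prod := by
          rw [map_list_prod]
          congr 1
          rw [facs_eq, List.map_map]
          refine List.map_congr_left fun a ha => ?_
          rw [List.mem_range] at ha
          exact phiR_fac m j a (by omega) (by omega)
        rw [hp0, hprod]
      rw [hY', ht]
    have h2 : (inc m Y * tIdem m k) *
        ((2 : ℂ)⁻¹ • ((1 : CCl m) + (-Complex.I) • (eC m (2 * k + 1) * eC m (2 * k + 2)))) = 0 := by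
      have := congrArg φ h
      rw [map_mul, hA, map_zero, phiR_fac_self m j k (by omega) rfl] at this
      exact this
    refine peel h h2 ?_
    rw [fac]
    exact halves m _
  · -- junk case: the last factor is `2⁻¹ • 1`
    have hz0 : eR m (2 * k + 2) = 0 := by
      rw [eR, dif_neg (by omega : ¬ 2 * k + 2 < m)]
    have hz : eC m (2 * k + 2) = 0 := by
      rw [eC, hz0, map_zero]
    rw [fac, hz, mul_zero, smul_zero, add_zero, mul_smul_comm, mul_one] at h
    exact half_smul_zero h

/-- Retraction showing `inc` is injective. -/
lemma inc_inj (m : ℕ) {x : Cl m} (h : inc m x = 0) : x = 0 := by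
  let L : CCl m →ₗ[ℝ] Cl m :=
    (TensorProduct.lid ℝ (Cl m)).toLinearMap ∘ₗ
      TensorProduct.map Complex.reLm (LinearMap.id (R := ℝ) (M := Cl m))
  have hL : L (inc m x) = x := by
    rw [inc, Algebra.TensorProduct.includeRight_apply]
    rw [LinearMap.comp_apply, TensorProduct.map_tmul, LinearMap.id_apply]
    rw [LinearEquiv.coe_toLinearMap, TensorProduct.lid_tmul]
    rw [show Complex.reLm 1 = Complex.re 1 from rfl, Complex.one_re, one_smul]
  rw [← hL, h, map_zero]

/-- If Y belongs to the even part Q'⁽⁰⁾ of the real subalgebra generated by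
e⁰,e¹,e²,e³,e⁵,…,e^{2d-1} and Y t = 0, then Y = 0. -/
theorem stmt11 (d : ℕ) (hd : 2 ≤ d) (Y : Cl (2 * d)) (hY : Y ∈ Qp0 (2 * d))
    (h : inc (2 * d) Y * tIdem (2 * d) (d - 1) = 0) : Y = 0 := by
  rw [Qp0, Algebra.mem_inf] at hY
  obtain ⟨hYa, hYe⟩ := hY
  -- Step 1: peel down to `tIdem (2*d) 1`
  have key : ∀ n, inc (2 * d) Y * tIdem (2 * d) (1 + n) = 0 →
      inc (2 * d) Y * tIdem (2 * d) 1 = 0 := by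
    intro n
    induction n with
    | zero => exact id
    | succ n ih =>
      intro hn
      exact ih (step (2 * d) (1 + n) Y hYa (Nat.le_add_right 1 n) hn)
  have hd1 : d - 1 = 1 + (d - 2) := by omega
  rw [hd1] at h
  have h1 : inc (2 * d) Y * tIdem (2 * d) 1 = 0 := key (d - 2) h
  -- Step 2: use complex conjugation to remove the factor with e¹e²
  rw [tIdem_succ, ← mul_assoc] at h1
  have hconj_inv : (Complex.conjAe.toAlgHom : ℂ →ₐ[ℝ] ℂ) (2 : ℂ)⁻¹ = (2 : ℂ)⁻¹ := by
    rw [conj_toAlgHom_apply, map_inv₀, Complex.conj_ofNat]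
  have hA : phiOf (2 * d) Complex.conjAe.toAlgHom (AlgHom.id ℝ (Cl (2 * d)))
      (inc (2 * d) Y * tIdem (2 * d) 0) = inc (2 * d) Y * tIdem (2 * d) 0 := by
    rw [map_mul, phiOf_inc, AlgHom.id_apply]
    have h0 : facs (2 * d) 0 = [] := rfl
    rw [tIdem, h0, List.prod_nil, mul_one, phiOf_smul, map_add, map_one, phiOf_eC,
      hconj_inv, AlgHom.id_apply, inc_eR]
  have hfac : phiOf (2 * d) Complex.conjAe.toAlgHom (AlgHom.id ℝ (Cl (2 * d))) (fac (2 * d) 0) =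
      (2 : ℂ)⁻¹ • ((1 : CCl (2 * d)) +
        (-Complex.I) • (eC (2 * d) (2 * 0 + 1) * eC (2 * d) (2 * 0 + 2))) := by
    rw [fac, phiOf_smul, map_add, map_one, phiOf_smul, map_mul, phiOf_eC, phiOf_eC,
      hconj_inv, conj_toAlgHom_apply, Complex.conj_I, AlgHom.id_apply, AlgHom.id_apply,
      inc_eR, inc_eR]
  have h2 : (inc (2 * d) Y * tIdem (2 * d) 0) *
      ((2 : ℂ)⁻¹ • ((1 : CCl (2 * d)) +
        (-Complex.I) • (eC (2 * d) (2 * 0 + 1) * eC (2 * d) (2 * 0 + 2)))) = 0 := by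
    have h1' := congrArg (phiOf (2 * d) Complex.conjAe.toAlgHom (AlgHom.id ℝ (Cl (2 * d)))) h1
    rw [map_mul, hA, map_zero, hfac] at h1'
    exact h1'
  have h3 : inc (2 * d) Y * tIdem (2 * d) 0 = 0 := by
    refine peel h1 h2 ?_
    rw [fac]
    exact halves (2 * d) _
  -- Step 3: conclude `Y * (1 + e⁰) = 0` in the real algebra
  have h4 : Y * (1 + eR (2 * d) 0) = 0 := by
    apply inc_inj (2 * d)
    have h0 : facs (2 * d) 0 = [] := rfl
    rw [tIdem, h0, List.prod_nil, mul_one, mul_smul_comm] at h3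
    have h5 : inc (2 * d) Y * ((1 : CCl (2 * d)) + eC (2 * d) 0) = 0 :=
      half_smul_zero h3
    rw [map_mul, map_add, map_one, inc_eR]
    exact h5
  -- Step 4: apply the grade involution, using that `Y` is even
  have hinv : CliffordAlgebra.involute Y = Y :=
    CliffordAlgebra.involute_eq_of_mem_even hYe
  have h6 : Y * (1 - eR (2 * d) 0) = 0 := by
    have h4' := congrArg (CliffordAlgebra.involute (Q := Qf (2 * d))) h4
    rw [map_mul, map_add, map_one, hinv, map_zero] at h4'
    have hie : CliffordAlgebra.involute (eR (2 * d) 0) = -(eR (2 * d) 0) := by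
      rw [eR, dif_pos (by omega : 0 < 2 * d)]
      simp
    rw [hie, ← sub_eq_add_neg] at h4'
    exact h4'
  have h7 : Y + Y = 0 := by
    have hsum : Y * (1 + eR (2 * d) 0) + Y * (1 - eR (2 * d) 0) = Y + Y := by
      rw [mul_add, mul_sub, mul_one]; abel
    rw [← hsum, h4, h6, add_zero]
  have h8 : (2 : ℝ) • Y = 0 := by rw [two_smul]; exact h7
  have h9 := congrArg (fun z : Cl (2 * d) => (2 : ℝ)⁻¹ • z) h8
  simp only [smul_smul, inv_mul_cancel₀ (by norm_num : (2 : ℝ) ≠ 0), one_smul, smul_zero] at h9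
  exact h9
end

section
/- Gauge invariance of the multidimensional Dirac–Hestenes equation (odd case n = 2d−1): let I = −e^1e^2, E = e^0 in Cl(1,2d−1), Q'^(0) the even part of the subalgebra generated by e^0,e^1,e^2,e^3,e^5,...,e^{2d−1}, a_μ and λ smooth real functions on ℝ^{1,2d−1}. If Ψ : ℝ^{1,2d−1} → Q'^(0) satisfies Σ_{μ∈{0,1,2,3,5,...,2d−1}} e^μ(∂_μΨ + Ψ a_μ I)E + Σ_{μ∈{3,5,...,2d−3}} (∂_{μ+1}Ψ + Ψ a_{μ+1} I) e^μ E I + mΨI = 0, then Ψ̃ = Ψ·exp(Iλ) satisfies the same equation with ã_μ = a_μ − ∂_μλ. -/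
open CliffordAlgebra TensorProduct

/-- Pseudo-Euclidean space ℝ^{1,m-1} in coordinates. -/
abbrev Sp (m : ℕ) : Type := Fin m → ℝ

/-- The k-th coordinate direction. -/
noncomputable def dir (m k : ℕ) : Sp m := fun i => if (i : ℕ) = k then 1 else 0

/-- `D` is the partial derivative ∂_k f, in the sense that every real linear functional of f
has the corresponding directional derivative. -/
def PDeriv {m : ℕ} {A : Type} [AddCommGroup A] [Module ℝ A]
    (f : Sp m → A) (k : ℕ) (D : Sp m → A) : Prop :=
  ∀ (l : A →ₗ[ℝ] ℝ) (x : Sp m),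
    HasDerivAt (fun s : ℝ => l (f (x + s • dir m k))) (l (D x)) 0

/-- The multidimensional Dirac--Hestenes equation in Cl(1,2d-1):
∑_{μ∈{0,1,2,3,5,…,2d-1}} e^μ(∂_μΨ + Ψ a_μ I)E
+ ∑_{μ∈{3,5,…,2d-3}} (∂_{μ+1}Ψ + Ψ a_{μ+1} I) e^μ E I + mΨI = 0,
with I = -e¹e², E = e⁰. -/
def DHeq (d : ℕ) (Ψ : Sp (2 * d) → Cl (2 * d)) (DΨ : ℕ → Sp (2 * d) → Cl (2 * d))
    (a : ℕ → Sp (2 * d) → ℝ) (mass : ℝ) : Prop :=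
  ∀ x : Sp (2 * d),
    (∑ k ∈ Finset.range (2 * d), if k = 0 ∨ k = 2 ∨ Odd k then
        eR (2 * d) k * (DΨ k x + a k x • (Ψ x * Iel (2 * d))) * eR (2 * d) 0 else 0)
    + (∑ k ∈ Finset.range (2 * d), if Odd k ∧ 3 ≤ k ∧ k ≤ 2 * d - 3 then
        (DΨ (k + 1) x + a (k + 1) x • (Ψ x * Iel (2 * d))) *
          (eR (2 * d) k * eR (2 * d) 0 * Iel (2 * d)) else 0)
    + mass • (Ψ x * Iel (2 * d)) = 0


section Aux

lemma Qf_single {m : ℕ} (u : Fin m) : Qf m (Pi.single u 1) = if (u:ℕ) = 0 then 1 else -1 := by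
  simp [Qf, Pi.single_apply]

lemma polar_single {m : ℕ} (u v : Fin m) (huv : u ≠ v) :
    QuadraticMap.polar (Qf m) (Pi.single u 1) ((Pi.single v 1 : Fin m → ℝ)) = 0 := by
  simp only [QuadraticMap.polar, Qf, QuadraticMap.weightedSumSquares_apply]
  rw [← Finset.sum_sub_distrib, ← Finset.sum_sub_distrib]
  apply Finset.sum_eq_zero
  intro i _
  have h1 : (Pi.single u 1 : Fin m → ℝ) i * (Pi.single v 1 : Fin m → ℝ) i = 0 := by
    rcases eq_or_ne i u with rfl | h
    · simp [Pi.single_apply, huv.symm]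
    · simp [Pi.single_apply, h]
  have : ((Pi.single u 1 : Fin m → ℝ) + (Pi.single v 1 : Fin m → ℝ)) i * ((Pi.single u 1 : Fin m → ℝ) + (Pi.single v 1 : Fin m → ℝ)) i
      = (Pi.single u 1 : Fin m → ℝ) i * (Pi.single u 1 : Fin m → ℝ) i + (Pi.single v 1 : Fin m → ℝ) i * (Pi.single v 1 : Fin m → ℝ) i := by
    simp only [Pi.add_apply]; nlinarith [h1]
  rw [this]; split_ifs <;> simp only [smul_eq_mul] <;> ring

lemma eR_anticomm {m i j : ℕ} (hij : i ≠ j) : eR m i * eR m j = -(eR m j * eR m i) := by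
  unfold eR
  split_ifs with hi hj hj
  · have hne : (⟨i, hi⟩ : Fin m) ≠ ⟨j, hj⟩ := by simpa using hij
    have h := CliffordAlgebra.ι_mul_ι_add_swap (Q := Qf m)
      (Pi.single (⟨i, hi⟩ : Fin m) 1) (Pi.single (⟨j, hj⟩ : Fin m) 1)
    rw [polar_single _ _ hne, map_zero] at h
    exact eq_neg_of_add_eq_zero_left h
  all_goals simp

lemma eR_sq_neg {m k : ℕ} (hk : k < m) (h0 : k ≠ 0) : eR m k * eR m k = -1 := by
  unfold eR
  rw [dif_pos hk, CliffordAlgebra.ι_sq_scalar, Qf_single]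
  simp [h0]

lemma Iel_sq {m : ℕ} (hm : 3 ≤ m) : Iel m * Iel m = -1 := by
  have h1 : (1:ℕ) < m := by omega
  have h2 : (2:ℕ) < m := by omega
  have ha : eR m 2 * eR m 1 = -(eR m 1 * eR m 2) := eR_anticomm (by norm_num)
  have : Iel m * Iel m = eR m 1 * (eR m 2 * eR m 1) * eR m 2 := by
    unfold Iel; noncomm_ring
  rw [this, ha]
  have : eR m 1 * -(eR m 1 * eR m 2) * eR m 2 = -((eR m 1 * eR m 1) * (eR m 2 * eR m 2)) := by
    noncomm_ring
  rw [this, eR_sq_neg h1 one_ne_zero, eR_sq_neg h2 (by norm_num)]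
  norm_num

lemma eR_comm_Iel {m k : ℕ} (h1 : k ≠ 1) (h2 : k ≠ 2) : eR m k * Iel m = Iel m * eR m k := by
  unfold Iel
  have a1 : eR m k * eR m 1 = -(eR m 1 * eR m k) := eR_anticomm h1
  have a2 : eR m k * eR m 2 = -(eR m 2 * eR m k) := eR_anticomm h2
  have : eR m k * (eR m 1 * eR m 2) = (eR m k * eR m 1) * eR m 2 := (mul_assoc _ _ _).symm
  rw [mul_neg, this, a1]
  have : -(eR m 1 * eR m k) * eR m 2 = -(eR m 1 * (eR m k * eR m 2)) := by noncomm_ring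
  rw [this, a2]
  noncomm_ring

lemma Iel_pow_even {m : ℕ} (hm : 3 ≤ m) (j : ℕ) :
    Iel m ^ (2 * j) = ((-1 : ℝ) ^ j) • (1 : Cl m) := by
  induction j with
  | zero => simp
  | succ n ih =>
    have : 2 * (n + 1) = 2 * n + 2 := by ring
    rw [this, pow_add, ih, pow_two, Iel_sq hm, pow_succ]
    simp [smul_smul]

lemma Iel_pow_odd {m : ℕ} (hm : 3 ≤ m) (j : ℕ) :
    Iel m ^ (2 * j + 1) = ((-1 : ℝ) ^ j) • Iel m := by
  rw [pow_succ, Iel_pow_even hm, smul_mul_assoc, one_mul]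

set_option maxHeartbeats 1000000 in
lemma exp_formula {m : ℕ} (hm : 3 ≤ m) (c : ℝ) (x : Cl m)
    (hx : IsExpOf m (c • Iel m) x) :
    x = Real.cos c • (1 : Cl m) + Real.sin c • Iel m := by
  rw [← sub_eq_zero]
  rw [← Module.forall_dual_apply_eq_zero_iff ℝ (V := Cl m)]
  intro l
  rw [map_sub, sub_eq_zero]
  have h := hx l
  have hcos : HasSum (fun j : ℕ => (((2 * j).factorial : ℝ))⁻¹ • l ((c • Iel m) ^ (2 * j)))
      (Real.cos c * l 1) := by
    have h0 := (Real.hasSum_cos c).mul_right (l 1)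
    have he : (fun j : ℕ => (((2 * j).factorial : ℝ))⁻¹ • l ((c • Iel m) ^ (2 * j)))
        = fun n : ℕ => (-1) ^ n * c ^ (2 * n) / ((2 * n).factorial : ℝ) * l 1 := by
      funext j
      rw [smul_pow, Iel_pow_even hm, smul_smul, map_smul]
      simp only [smul_eq_mul, map_one]
      ring
    rw [he]; exact h0
  have hsin : HasSum (fun j : ℕ => (((2 * j + 1).factorial : ℝ))⁻¹ • l ((c • Iel m) ^ (2 * j + 1)))
      (Real.sin c * l (Iel m)) := by
    have h0 := (Real.hasSum_sin c).mul_right (l (Iel m))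
    have he : (fun j : ℕ => (((2 * j + 1).factorial : ℝ))⁻¹ • l ((c • Iel m) ^ (2 * j + 1)))
        = fun n : ℕ => (-1) ^ n * c ^ (2 * n + 1) / ((2 * n + 1).factorial : ℝ) * l (Iel m) := by
      funext j
      rw [smul_pow, Iel_pow_odd hm, smul_smul, map_smul]
      simp only [smul_eq_mul]
      ring
    rw [he]; exact h0
  have h2 : HasSum (fun k : ℕ => ((k.factorial : ℝ))⁻¹ • l ((c • Iel m) ^ k))
      (Real.cos c * l 1 + Real.sin c * l (Iel m)) := hcos.even_add_odd hsin
  have := h.unique h2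
  rw [this]
  simp [smul_eq_mul]

lemma exp_comm {m : ℕ} (E u : Cl m) (c s : ℝ) (hE : E = c • 1 + s • Iel m)
    (hu : u * Iel m = Iel m * u) : u * E = E * u := by
  subst hE
  simp only [mul_add, add_mul, mul_smul_comm, smul_mul_assoc, mul_one, one_mul, hu]

lemma sandwich {A : Type*} [Ring A] (u P E v : A) (h : v * E = E * v) :
    u * (P * E) * v = (u * P * v) * E := by
  rw [← mul_assoc, mul_assoc (u * P) E v, ← h, ← mul_assoc]

end Aux

/-- Gauge invariance of the multidimensional Dirac--Hestenes equation (odd case n = 2d-1):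
if Ψ (valued in Q'⁽⁰⁾) solves the Dirac--Hestenes equation with potential a, then
Ψ̃ = Ψ·exp(Iλ) solves it with potential ã_μ = a_μ - ∂_μλ. -/
theorem stmt17 (d : ℕ) (hd : 2 ≤ d) (mass : ℝ)
    (Ψ : Sp (2 * d) → Cl (2 * d)) (hmem : ∀ x, Ψ x ∈ Qp0 (2 * d))
    (DΨ : ℕ → Sp (2 * d) → Cl (2 * d)) (hDΨ : ∀ k < 2 * d, PDeriv Ψ k (DΨ k))
    (a : ℕ → Sp (2 * d) → ℝ)
    (lam : Sp (2 * d) → ℝ) (Dlam : ℕ → Sp (2 * d) → ℝ)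
    (hDlam : ∀ k < 2 * d, PDeriv lam k (Dlam k))
    (Exp : Sp (2 * d) → Cl (2 * d))
    (hExp : ∀ x, IsExpOf (2 * d) (lam x • Iel (2 * d)) (Exp x))
    (hEq : DHeq d Ψ DΨ a mass)
    (DΨt : ℕ → Sp (2 * d) → Cl (2 * d))
    (hDΨt : ∀ k < 2 * d, PDeriv (fun x => Ψ x * Exp x) k (DΨt k)) :
    DHeq d (fun x => Ψ x * Exp x) DΨt (fun k x => a k x - Dlam k x) mass := by
  have hm : 3 ≤ 2 * d := by omega
  have hExpEq : ∀ x, Exp x = Real.cos (lam x) • (1 : Cl (2*d)) + Real.sin (lam x) • Iel (2*d) :=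
    fun x => exp_formula hm (lam x) _ (hExp x)
  -- identify DΨt
  have key : ∀ k, k < 2*d → ∀ x, DΨt k x
      = DΨ k x * Exp x + Dlam k x • (Ψ x * Iel (2*d) * Exp x) := by
    intro k hk x
    rw [← sub_eq_zero, ← Module.forall_dual_apply_eq_zero_iff ℝ (V := Cl (2*d))]
    intro l
    rw [map_sub, sub_eq_zero]
    have hx0 : x + (0:ℝ) • dir (2*d) k = x := by simp
    have hlam : HasDerivAt (fun s : ℝ => lam (x + s • dir (2*d) k)) (Dlam k x) 0 := by
      simpa using hDlam k hk LinearMap.id x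
    have hcos : HasDerivAt (fun s : ℝ => Real.cos (lam (x + s • dir (2*d) k)))
        (-Real.sin (lam x) * Dlam k x) 0 := by
      have := hlam.cos
      rwa [hx0] at this
    have hsin : HasDerivAt (fun s : ℝ => Real.sin (lam (x + s • dir (2*d) k)))
        (Real.cos (lam x) * Dlam k x) 0 := by
      have := hlam.sin
      rwa [hx0] at this
    have hP : HasDerivAt (fun s : ℝ => l (Ψ (x + s • dir (2*d) k))) (l (DΨ k x)) 0 :=
      hDΨ k hk l x
    have hPI : HasDerivAt (fun s : ℝ => l (Ψ (x + s • dir (2*d) k) * Iel (2*d)))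
        (l (DΨ k x * Iel (2*d))) 0 := by
      have := hDΨ k hk (l ∘ₗ LinearMap.mulRight ℝ (Iel (2*d))) x
      simpa using this
    have hprod := (hcos.mul hP).add (hsin.mul hPI)
    rw [hx0] at hprod
    have h1 := hDΨt k hk l x
    have hfun : (fun s : ℝ => l (Ψ (x + s • dir (2*d) k) * Exp (x + s • dir (2*d) k)))
        = fun s : ℝ => Real.cos (lam (x + s • dir (2*d) k)) * l (Ψ (x + s • dir (2*d) k))
            + Real.sin (lam (x + s • dir (2*d) k)) * l (Ψ (x + s • dir (2*d) k) * Iel (2*d)) := by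
      funext s
      rw [hExpEq, mul_add, mul_smul_comm, mul_smul_comm, mul_one, map_add, map_smul, map_smul,
        smul_eq_mul, smul_eq_mul]
    rw [hfun] at h1
    have hval := h1.unique hprod
    rw [hval]
    have hII : Ψ x * Iel (2*d) * Exp x
        = Real.cos (lam x) • (Ψ x * Iel (2*d)) - Real.sin (lam x) • Ψ x := by
      rw [hExpEq x, mul_add, mul_smul_comm, mul_one, mul_smul_comm, mul_assoc, Iel_sq hm,
        mul_neg_one, smul_neg, ← sub_eq_add_neg]
    have hDE : DΨ k x * Exp x
        = Real.cos (lam x) • DΨ k x + Real.sin (lam x) • (DΨ k x * Iel (2*d)) := by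
      rw [hExpEq x, mul_add, mul_smul_comm, mul_one, mul_smul_comm]
    rw [map_add, map_smul, hII, hDE, map_add, map_smul, map_smul, map_sub, map_smul, map_smul]
    simp only [smul_eq_mul]
    ring
  -- commutation facts
  intro x
  have hE := hExpEq x
  have hcommI : Iel (2*d) * Exp x = Exp x * Iel (2*d) := exp_comm _ _ _ _ hE rfl
  have hcomm0 : eR (2*d) 0 * Exp x = Exp x * eR (2*d) 0 :=
    exp_comm _ _ _ _ hE (eR_comm_Iel (by norm_num) (by norm_num))
  have hPsiEI : ∀ u : Cl (2*d), u * Exp x * Iel (2*d) = u * Iel (2*d) * Exp x := by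
    intro u
    rw [mul_assoc, ← hcommI, ← mul_assoc]
  have h0 := congrArg (· * Exp x) (hEq x)
  simp only [zero_mul] at h0
  refine Eq.trans ?_ h0
  beta_reduce
  rw [add_mul, add_mul, Finset.sum_mul, Finset.sum_mul]
  congr 1
  congr 1
  · apply Finset.sum_congr rfl
    intro k hk
    rw [Finset.mem_range] at hk
    by_cases hc : k = 0 ∨ k = 2 ∨ Odd k
    · rw [if_pos hc, if_pos hc, key k hk x, hPsiEI]
      have inner : DΨ k x * Exp x + Dlam k x • (Ψ x * Iel (2*d) * Exp x)
          + (a k x - Dlam k x) • (Ψ x * Iel (2*d) * Exp x)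
          = (DΨ k x + a k x • (Ψ x * Iel (2*d))) * Exp x := by
        rw [add_mul, smul_mul_assoc]
        module
      rw [inner]
      exact sandwich _ _ _ _ hcomm0
    · rw [if_neg hc, if_neg hc, zero_mul]
  · apply Finset.sum_congr rfl
    intro k hk
    rw [Finset.mem_range] at hk
    by_cases hc : Odd k ∧ 3 ≤ k ∧ k ≤ 2 * d - 3
    · rw [if_pos hc, if_pos hc]
      have hk1 : k + 1 < 2 * d := by omega
      rw [key (k+1) hk1 x, hPsiEI]
      have inner : DΨ (k+1) x * Exp x + Dlam (k+1) x • (Ψ x * Iel (2*d) * Exp x)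
          + (a (k+1) x - Dlam (k+1) x) • (Ψ x * Iel (2*d) * Exp x)
          = (DΨ (k+1) x + a (k+1) x • (Ψ x * Iel (2*d))) * Exp x := by
        rw [add_mul, smul_mul_assoc]
        module
      rw [inner]
      have hkne1 : k ≠ 1 := by omega
      have hkne2 : k ≠ 2 := by omega
      have c1 : eR (2*d) k * Iel (2*d) = Iel (2*d) * eR (2*d) k := eR_comm_Iel hkne1 hkne2
      have c0 : eR (2*d) 0 * Iel (2*d) = Iel (2*d) * eR (2*d) 0 :=
        eR_comm_Iel (by norm_num) (by norm_num)
      have hu : (eR (2*d) k * eR (2*d) 0 * Iel (2*d)) * Iel (2*d)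
          = Iel (2*d) * (eR (2*d) k * eR (2*d) 0 * Iel (2*d)) := by
        rw [show Iel (2*d) * (eR (2*d) k * eR (2*d) 0 * Iel (2*d))
              = ((Iel (2*d) * eR (2*d) k) * eR (2*d) 0) * Iel (2*d) by noncomm_ring,
          ← c1,
          show ((eR (2*d) k * Iel (2*d)) * eR (2*d) 0) * Iel (2*d)
              = (eR (2*d) k * (Iel (2*d) * eR (2*d) 0)) * Iel (2*d) by noncomm_ring,
          ← c0]
        noncomm_ring
      have hwE : (eR (2*d) k * eR (2*d) 0 * Iel (2*d)) * Exp x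
          = Exp x * (eR (2*d) k * eR (2*d) 0 * Iel (2*d)) := exp_comm _ _ _ _ hE hu
      rw [mul_assoc, ← hwE, ← mul_assoc]
    · rw [if_neg hc, if_neg hc, zero_mul]
  · rw [hPsiEI, smul_mul_assoc]
end
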